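/- arXiv:math/0204342 — 3 statements merged into one kernel-verified Lean document; each statement's English description precedes it below -/
import Mathlib

section
/- Let A be a unital associative algebra and let ρ : A → A be a linear map with curvature ω(x,y) = ρ(xy) - ρ(x)ρ(y). Suppose for all x, y ∈ A: x·ω(1,y) - x·ω(1,1)·y - ω(x,y) + ω(x,1)·y = 0. If ρ(1) = 1, then ρ is an algebra homomorphism; if ρ(1) = 0, then ρ is an Ito derivative. -/
/-- If the curvature `ω(x,y) = ρ(xy) - ρ(x)ρ(y)` of a linear map `ρ` satisfies
`x·ω(1,y) - x·ω(1,1)·y - ω(x,y) + ω(x,1)·y = 0` for all `x, y`, then `ρ` is an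
algebra homomorphism when `ρ 1 = 1`, and an Ito derivative when `ρ 1 = 0`. -/
theorem hom_or_ito_of_curvature_eq {k : Type*} {A : Type*} [Field k] [Ring A]
    [Algebra k A] (ρ : A →ₗ[k] A) (ω : A → A → A)
    (hω : ∀ x y : A, ω x y = ρ (x * y) - ρ x * ρ y)
    (heq : ∀ x y : A, x * ω 1 y - x * ω 1 1 * y - ω x y + ω x 1 * y = 0) :
    (ρ 1 = 1 → ∀ x y : A, ρ (x * y) = ρ x * ρ y) ∧
      (ρ 1 = 0 → ∀ x y : A, ρ (x * y) = ρ x * y + x * ρ y + ρ x * ρ y) := by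
  constructor
  · intro h1 x y
    have h := heq x y
    simp only [hω, one_mul, mul_one, h1] at h
    have h2 : ρ x * ρ y - ρ (x * y) = 0 := by rw [← h]; noncomm_ring
    exact (sub_eq_zero.mp h2).symm
  · intro h0 x y
    have h := heq x y
    simp only [hω, one_mul, mul_one, h0] at h
    have h2 : (ρ x * y + x * ρ y + ρ x * ρ y) - ρ (x * y) = 0 := by rw [← h]; noncomm_ring
    exact (sub_eq_zero.mp h2).symm
end

section
/- Let D be a vector space with two associative bilinear products ⊣ and ⊢ satisfying x ⊣ (y ⊣ z) = x ⊣ (y ⊢ z) and (x ⊢ y) ⊣ z = x ⊢ (y ⊣ z) (a pre-dialgebra of type I). Then setting a ≺ b = a ⊣ b and a ≻ b = a ⊢ b - a ⊣ b makes D a dendriform algebra: (a ≺ b) ≺ c = a ≺ (b ≺ c) + a ≺ (b ≻ c), (a ≻ b) ≺ c = a ≻ (b ≺ c), and (a ≺ b) ≻ c + (a ≻ b) ≻ c = a ≻ (b ≻ c). -/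
/-- A pre-dialgebra of type I becomes a dendriform algebra via
`a ≺ b = a ⊣ b` and `a ≻ b = a ⊢ b - a ⊣ b`. -/
theorem predialgebraI_dendriform {k : Type*} {D : Type*} [Field k]
    [AddCommGroup D] [Module k D] (l r : D →ₗ[k] D →ₗ[k] D)
    (hl : ∀ x y z : D, l (l x y) z = l x (l y z))
    (hr : ∀ x y z : D, r (r x y) z = r x (r y z))
    (h1 : ∀ x y z : D, l x (l y z) = l x (r y z))
    (h2 : ∀ x y z : D, l (r x y) z = r x (l y z))
    (p s : D → D → D)
    (hp : ∀ a b : D, p a b = l a b)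
    (hs : ∀ a b : D, s a b = r a b - l a b) :
    (∀ a b c : D, p (p a b) c = p a (p b c) + p a (s b c)) ∧
      (∀ a b c : D, p (s a b) c = s a (p b c)) ∧
      (∀ a b c : D, s (p a b) c + s (s a b) c = s a (s b c)) := by
  refine ⟨fun a b c => ?_, fun a b c => ?_, fun a b c => ?_⟩ <;>
    simp only [hp, hs, map_sub, LinearMap.sub_apply, hl, hr, h1, h2] <;> abel
end

section
/- Let D be a vector space with two associative bilinear products ⊣ and ⊢ satisfying (x ⊢ y) ⊣ z = x ⊢ (y ⊣ z) and (x ⊣ y) ⊢ z = (x ⊢ y) ⊢ z (a pre-dialgebra of type III). Then setting a ≻ b = a ⊢ b and a ≺ b = a ⊣ b - a ⊢ b makes D a dendriform algebra. -/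
/-- A pre-dialgebra of type III becomes a dendriform algebra via
`a ≻ b = a ⊢ b` and `a ≺ b = a ⊣ b - a ⊢ b`. -/
theorem predialgebraIII_dendriform {k : Type*} {D : Type*} [Field k]
    [AddCommGroup D] [Module k D] (l r : D →ₗ[k] D →ₗ[k] D)
    (hl : ∀ x y z : D, l (l x y) z = l x (l y z))
    (hr : ∀ x y z : D, r (r x y) z = r x (r y z))
    (h2 : ∀ x y z : D, l (r x y) z = r x (l y z))
    (h3 : ∀ x y z : D, r (l x y) z = r (r x y) z)
    (p s : D → D → D)
    (hs : ∀ a b : D, s a b = r a b)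
    (hp : ∀ a b : D, p a b = l a b - r a b) :
    (∀ a b c : D, p (p a b) c = p a (p b c) + p a (s b c)) ∧
      (∀ a b c : D, p (s a b) c = s a (p b c)) ∧
      (∀ a b c : D, s (p a b) c + s (s a b) c = s a (s b c)) := by
  refine ⟨fun a b c => ?_, fun a b c => ?_, fun a b c => ?_⟩ <;>
    simp only [hp, hs, map_sub, LinearMap.sub_apply, map_add, LinearMap.add_apply, hl, hr, h2, h3] <;>
    abel
end
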